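/- Let G be a finite simple connected undirected graph on n ≥ 2 vertices whose normalized Laplacian 𝓛 has eigenvalues 0 = λ₀ < λ₁ ≤ … ≤ λ_{n−1} ≤ 2, and for η ∈ [0,1) define g(η) = max_{i=1,…,n−1} |η + (1−η)(1 − λᵢ)|. If ς := (λ₁ + λ_{n−1})/2 > 1, then η* = 1 − ς⁻¹ belongs to [0,1) and is the unique minimizer of g over [0,1); equivalently η* = (λ₁ + λ_{n−1} − 2)/(λ₁ + λ_{n−1}). -/
import Mathlib


/-- Let `G` be a finite simple connected graph on `n ≥ 2` vertices whose
normalized Laplacian `𝓛 = I - D^{-1/2} A D^{-1/2}` has eigenvalues (listed with multiplicity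
in increasing order, via a diagonalization) `0 = λ₀ < λ₁ ≤ … ≤ λ_{n-1} ≤ 2`, and for
`η ∈ [0,1)` let `g(η) = max_{i=1,…,n-1} |η + (1-η)(1-λᵢ)|`. If `ς = (λ₁ + λ_{n-1})/2 > 1`,
then `η* = 1 - ς⁻¹` belongs to `[0,1)` and is the unique minimizer of `g` over `[0,1)`;
equivalently `η* = (λ₁ + λ_{n-1} - 2)/(λ₁ + λ_{n-1})`. -/
theorem stmt_8 {n : ℕ} (hn : 2 ≤ n) (G : SimpleGraph (Fin n)) [DecidableRel G.Adj]
    (hconn : G.Connected)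
    (lam : Fin n → ℝ) (hmono : Monotone lam)
    (hlam0 : lam ⟨0, by omega⟩ = 0) (hlam1 : 0 < lam ⟨1, by omega⟩)
    (hlamtop : lam ⟨n - 1, by omega⟩ ≤ 2)
    (hdiag : ∃ P : Matrix (Fin n) (Fin n) ℝ, IsUnit P.det ∧
      ((1 : Matrix (Fin n) (Fin n) ℝ)
          - (Matrix.diagonal fun i => (Real.sqrt (G.degree i))⁻¹) * G.adjMatrix ℝ
              * (Matrix.diagonal fun i => (Real.sqrt (G.degree i))⁻¹)) * P
        = P * Matrix.diagonal lam)
    (g : ℝ → ℝ)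
    (hg : ∀ η : ℝ, g η = Finset.sup' (Finset.univ.erase (⟨0, by omega⟩ : Fin n))
      ⟨⟨1, by omega⟩, by simp [Finset.mem_erase, Fin.ext_iff]⟩
      fun i => |η + (1 - η) * (1 - lam i)|)
    (hς : 1 < (lam ⟨1, by omega⟩ + lam ⟨n - 1, by omega⟩) / 2) :
    (1 - ((lam ⟨1, by omega⟩ + lam ⟨n - 1, by omega⟩) / 2)⁻¹) ∈ Set.Ico (0 : ℝ) 1
    ∧ (∀ η ∈ Set.Ico (0 : ℝ) 1,
        η ≠ 1 - ((lam ⟨1, by omega⟩ + lam ⟨n - 1, by omega⟩) / 2)⁻¹ →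
        g (1 - ((lam ⟨1, by omega⟩ + lam ⟨n - 1, by omega⟩) / 2)⁻¹) < g η)
    ∧ 1 - ((lam ⟨1, by omega⟩ + lam ⟨n - 1, by omega⟩) / 2)⁻¹
        = (lam ⟨1, by omega⟩ + lam ⟨n - 1, by omega⟩ - 2)
            / (lam ⟨1, by omega⟩ + lam ⟨n - 1, by omega⟩) := by

  have h1lt : (1:ℕ) < n := by omega
  have hi1le : (⟨1, by omega⟩ : Fin n) ≤ ⟨n-1, by omega⟩ := by
    simp only [Fin.mk_le_mk]; omega
  set a : ℝ := lam ⟨1, by omega⟩ with ha_def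
  set b : ℝ := lam ⟨n-1, by omega⟩ with hb_def
  have hab : a ≤ b := hmono hi1le
  have ha : 0 < a := hlam1
  have hs : 2 < a + b := by linarith
  have hs0 : (0:ℝ) < a + b := by linarith
  have hinv : ((a+b)/2)⁻¹ = 2/(a+b) := by rw [inv_div]
  have hη0 : 0 ≤ 1 - ((a+b)/2)⁻¹ := by
    rw [hinv]
    have : 2/(a+b) ≤ 1 := by rw [div_le_one hs0]; linarith
    linarith
  have hη1 : 1 - ((a+b)/2)⁻¹ < 1 := by
    have : 0 < ((a+b)/2)⁻¹ := by positivity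
    linarith
  refine ⟨⟨hη0, hη1⟩, ?_, ?_⟩
  · intro x hx hne
    have hi1mem : (⟨1, by omega⟩ : Fin n) ∈ Finset.univ.erase (⟨0, by omega⟩ : Fin n) := by
      simp [Finset.mem_erase, Fin.ext_iff]
    have hitopmem : (⟨n-1, by omega⟩ : Fin n) ∈ Finset.univ.erase (⟨0, by omega⟩ : Fin n) := by
      simp only [Finset.mem_erase, Finset.mem_univ, and_true, ne_eq, Fin.mk.injEq]
      omega
    set M : ℝ := (b - a)/(a+b) with hM_def
    set η : ℝ := 1 - ((a+b)/2)⁻¹ with hη_def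
    have hηval : η = 1 - 2/(a+b) := by rw [hη_def, hinv]
    have hgη : g η ≤ M := by
      rw [hg]
      apply Finset.sup'_le
      intro i hi
      have hi0 : i ≠ ⟨0, by omega⟩ := (Finset.mem_erase.mp hi).1
      have hia : a ≤ lam i := by
        apply hmono
        simp only [Fin.mk_le_mk, Fin.le_def]
        have : i.val ≠ 0 := fun h => hi0 (Fin.ext h)
        omega
      have hib : lam i ≤ b := by
        apply hmono
        simp only [Fin.le_def]
        have := i.isLt
        omega
      have e : η + (1 - η) * (1 - lam i) = ((a+b) - 2 * lam i)/(a+b) := by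
        rw [hηval]; field_simp; ring
      rw [e, hM_def, abs_div, abs_of_pos hs0]
      gcongr
      rw [abs_le]
      constructor <;> linarith
    have hxη : x ∈ Set.Ico (0:ℝ) 1 := hx
    obtain ⟨hx0, hx1⟩ := hxη
    rcases lt_or_gt_of_ne hne with hlt | hgt
    · -- x < η : use the top eigenvalue b
      have hb0 : 0 < b := lt_of_lt_of_le ha hab
      have ht : 2/(a+b) < 1 - x := by rw [hηval] at hlt; linarith
      have hmul : 2/(a+b) * b < (1-x) * b := mul_lt_mul_of_pos_right ht hb0
      have hMeq : M = 2/(a+b) * b - 1 := by rw [hM_def]; field_simp; ring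
      calc g η ≤ M := hgη
        _ < (1-x)*b - 1 := by linarith
        _ ≤ |x + (1 - x) * (1 - b)| := by
            have e2 : (1-x)*b - 1 = -(x + (1 - x) * (1 - b)) := by ring
            rw [e2]; exact neg_le_abs _
        _ ≤ g x := by rw [hg]; exact Finset.le_sup' (fun i => |x + (1 - x) * (1 - lam i)|) hitopmem
    · -- x > η : use the bottom eigenvalue a
      have ht : 1 - x < 2/(a+b) := by rw [hηval] at hgt; linarith
      have hmul : (1-x) * a < 2/(a+b) * a := mul_lt_mul_of_pos_right ht ha
      have hMeq : M = 1 - 2/(a+b) * a := by rw [hM_def]; field_simp; ring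
      calc g η ≤ M := hgη
        _ < x + (1 - x) * (1 - a) := by nlinarith
        _ ≤ |x + (1 - x) * (1 - a)| := le_abs_self _
        _ ≤ g x := by rw [hg]; exact Finset.le_sup' (fun i => |x + (1 - x) * (1 - lam i)|) hi1mem
  · rw [hinv]
    rw [eq_div_iff (by linarith : a + b ≠ 0)]
    field_simp
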